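/- Let (V,β,ρ) be a representation of a regular Hom-Lie algebra (g,[·,·],φ) with β invertible. Then the double dual representation satisfies (ρ⋆)⋆ = ρ, where ρ⋆(x)(ξ) = ρ*(φ(x))((β⁻²)*(ξ)) is the dual representation of ρ on V* with respect to (β⁻¹)*, and (ρ⋆)⋆ is the dual representation of ρ⋆ on V** ≅ V (assuming V finite-dimensional). -/

import Mathlib

/-! Unwinding both dualizations, `(ρ⋆)⋆(x)` acts on `V ≅ V**` as `β² ∘ ρ(φ⁻²x) ∘ β⁻²`, the two
minus signs cancelling. Inverting the equivariance `ρ(φx) ∘ β = β ∘ ρ(x)` of a representation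
gives `β ∘ ρ(φ⁻¹x) ∘ β⁻¹ = ρ(x)`, and applying this twice leaves `ρ(x)`. -/

open LinearMap Module

/-- A (regular, i.e. multiplicative with invertible structure map) Hom-Lie algebra. -/
structure HomLieAlgebra (K g : Type*) [Field K] [AddCommGroup g] [Module K g] where
  bracket : g →ₗ[K] g →ₗ[K] g
  phi : g ≃ₗ[K] g
  skew : ∀ x y, bracket x y = - bracket y x
  phi_bracket : ∀ x y, phi (bracket x y) = bracket (phi x) (phi y)
  jacobi : ∀ x y z,
    bracket (phi x) (bracket y z) + bracket (phi y) (bracket z x)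
      + bracket (phi z) (bracket x y) = 0

variable {K g V : Type*} [Field K] [AddCommGroup g] [Module K g]
  [AddCommGroup V] [Module K V]

/-- `ρ` is a representation of the Hom-Lie algebra `L` on `V` with respect to `β`. -/
def HomLieAlgebra.IsRep (L : HomLieAlgebra K g) (β : V ≃ₗ[K] V)
    (ρ : g →ₗ[K] V →ₗ[K] V) : Prop :=
  (∀ x u, ρ (L.phi x) (β u) = β (ρ x u)) ∧
  (∀ x y u, ρ (L.bracket x y) (β u) = ρ (L.phi x) (ρ y u) - ρ (L.phi y) (ρ x u))

/-- The dual representation `ρ⋆(x)` as a linear endomorphism of `V*`: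
`⟨ρ⋆(x)ξ, u⟩ = −⟨ξ, ρ(φ⁻¹x)(β⁻²u)⟩`, i.e. `ρ⋆(x) = ρ*(φ(x)) ∘ (β⁻²)*`. -/
def dualRepL (L : HomLieAlgebra K g) (β : V ≃ₗ[K] V) (ρ : g →ₗ[K] V →ₗ[K] V)
    (x : g) : Dual K V →ₗ[K] Dual K V :=
  - (ρ (L.phi.symm x) ∘ₗ β.symm.toLinearMap ∘ₗ β.symm.toLinearMap).dualMap

/-- The dual representation of `ρ⋆` (a representation on `V*` with respect to
`γ = (β⁻¹)*`): `⟨(ρ⋆)⋆(x)Φ, ξ⟩ = −⟨Φ, ρ⋆(φ⁻¹x)(γ⁻²ξ)⟩`, where `γ⁻¹ ξ = ξ ∘ β`. -/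
def doubleDualRep (L : HomLieAlgebra K g) (β : V ≃ₗ[K] V) (ρ : g →ₗ[K] V →ₗ[K] V)
    (x : g) (Φ : Dual K (Dual K V)) : Dual K (Dual K V) :=
  - (Φ ∘ₗ dualRepL L β ρ (L.phi.symm x)
      ∘ₗ β.toLinearMap.dualMap ∘ₗ β.toLinearMap.dualMap)

theorem HomLieAlgebra.IsRep.apply_symm_symm {L : HomLieAlgebra K g} {β : V ≃ₗ[K] V}
    {ρ : g →ₗ[K] V →ₗ[K] V} (hρ : L.IsRep β ρ) (x : g) (u : V) :
    ρ (L.phi.symm x) (β.symm u) = β.symm (ρ x u) := by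
  rw [β.eq_symm_apply, ← hρ.1, L.phi.apply_symm_apply, β.apply_symm_apply]

theorem doubleDualRep_eval_apply (L : HomLieAlgebra K g) (β : V ≃ₗ[K] V)
    (ρ : g →ₗ[K] V →ₗ[K] V) (x : g) (u : V) (ξ : Dual K V) :
    doubleDualRep L β ρ x (Dual.eval K V u) ξ =
      ξ (β (β (ρ (L.phi.symm (L.phi.symm x)) (β.symm (β.symm u))))) := by
  simp only [doubleDualRep, dualRepL, LinearMap.neg_apply, comp_apply, dualMap_apply, neg_neg,
    Dual.eval_apply, LinearEquiv.coe_coe]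

theorem doubleDualRep_eq_general (L : HomLieAlgebra K g) (β : V ≃ₗ[K] V)
    (ρ : g →ₗ[K] V →ₗ[K] V) (hρ : L.IsRep β ρ) :
    ∀ (x : g) (u : V),
      doubleDualRep L β ρ x (Dual.eval K V u) = Dual.eval K V (ρ x u) := by
  intro x u
  ext ξ
  rw [doubleDualRep_eval_apply, hρ.apply_symm_symm, hρ.apply_symm_symm,
    β.apply_symm_apply, β.apply_symm_apply, Dual.eval_apply]

/-- under the canonical identification `V ≅ V**` (for `V`
finite-dimensional), `(ρ⋆)⋆ = ρ`. -/
theorem doubleDualRep_eq (L : HomLieAlgebra K g) (β : V ≃ₗ[K] V)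
    (ρ : g →ₗ[K] V →ₗ[K] V) (hρ : L.IsRep β ρ) [FiniteDimensional K V] :
    ∀ (x : g) (u : V),
      doubleDualRep L β ρ x (Dual.eval K V u) = Dual.eval K V (ρ x u) :=
  doubleDualRep_eq_general L β ρ hρ
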